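/- arXiv:2202.09838 — 2 statements merged into one kernel-verified Lean document; each statement's English description precedes it below -/
import Mathlib

section
/- Let X = {X_{k,n} : 1 ≤ k ≤ k(n), n ≥ 1} be an array of random variables on a common probability space with k(n) → ∞, such that for each n the variables X_{1,n}, …, X_{k(n),n} are independent and X_{k,n} follows the corrected geometric law G*(p_{k,n}) with 0 < p_{k,n} = 1 − q_{k,n} < 1. Assume: (2) sup_{1≤k≤k(n)} q_{k,n} → 0 as n → ∞; (3) Σ_{k=1}^{k(n)} q_{k,n} → λ for some λ ∈ (0,∞). Then the row sums S_n[X] = Σ_{k=1}^{k(n)} X_{k,n} converge in distribution to the Poisson law P(λ); equivalently, for every j ∈ ℕ, P(S_n[X] = j) → e^{−λ} λ^j / j!. -/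
open MeasureTheory ProbabilityTheory Filter Finset Topology

/-! By independence, `P(S_n = j) = (∏ k, p_k) * h_j(q)`, where `h_j` is the complete
homogeneous symmetric polynomial of degree `j` in the `q_k = 1 - p_k`. The product
`∏ k, (1 - q_k)` lies between `exp (-(∑ q_k) / (1 - max q_k))` and `exp (-∑ q_k)`, hence tends
to `exp (-λ)`. Against the multinomial expansion of `(∑ q_k) ^ j`, the compositions of `j` with
all parts at most `1` weigh exactly `(∑ q_k) ^ j / j!`, and those with a part at least `2` weigh
at most `(∑ q_k ^ 2) * (∑ q_k) ^ (j - 2) ≤ max q_k * (∑ q_k) ^ (j - 1) → 0`; so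
`h_j(q) → λ ^ j / j!`. -/

section CompleteHomogeneous

variable {ι : Type*} [Fintype ι] {q : ι → ℝ}

lemma prod_pow_nonneg (hq : ∀ i, 0 ≤ q i) (x : ι → ℕ) : 0 ≤ ∏ i, q i ^ x i :=
  prod_nonneg fun i _ => pow_nonneg (hq i) _

variable [DecidableEq ι]

noncomputable def completeHomogeneous (q : ι → ℝ) (j : ℕ) : ℝ :=
  ∑ x ∈ piAntidiag univ j, ∏ i, q i ^ x i

lemma completeHomogeneous_le_pow_sum (hq : ∀ i, 0 ≤ q i) (j : ℕ) :
    completeHomogeneous q j ≤ (∑ i, q i) ^ j := by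
  rw [sum_pow_eq_sum_piAntidiag, completeHomogeneous]
  refine sum_le_sum fun x _ => le_mul_of_one_le_left (prod_pow_nonneg hq x) ?_
  exact_mod_cast Nat.multinomial_pos _ _

lemma multinomial_le_factorial {x : ι → ℕ} {j : ℕ} (hx : x ∈ piAntidiag univ j) :
    Nat.multinomial univ x ≤ j.factorial := by
  rw [← (mem_piAntidiag.1 hx).1, ← Nat.multinomial_spec]
  exact Nat.le_mul_of_pos_left _ (prod_pos fun i _ => (x i).factorial_pos)

lemma pow_sum_le_factorial_mul_completeHomogeneous (hq : ∀ i, 0 ≤ q i) (j : ℕ) :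
    (∑ i, q i) ^ j ≤ j.factorial * completeHomogeneous q j := by
  rw [sum_pow_eq_sum_piAntidiag, completeHomogeneous, mul_sum]
  refine sum_le_sum fun x hx => mul_le_mul_of_nonneg_right ?_ (prod_pow_nonneg hq x)
  exact_mod_cast multinomial_le_factorial hx

lemma factorial_le_multinomial_add {x : ι → ℕ} {j : ℕ} (hx : x ∈ piAntidiag univ j) :
    j.factorial ≤ Nat.multinomial univ x + j.factorial * #{i | 2 ≤ x i} := by
  by_cases h : ∀ i, x i ≤ 1
  · have hprod : ∏ i, (x i).factorial = 1 :=
      prod_eq_one fun i _ => by have := h i; interval_cases x i <;> rfl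
    have := Nat.multinomial_spec univ x
    rw [hprod, one_mul, (mem_piAntidiag.1 hx).1] at this
    omega
  · obtain ⟨i, hi⟩ := not_forall.1 h
    have : 0 < #{i | 2 ≤ x i} := card_pos.2 ⟨i, by simp; omega⟩
    nlinarith

lemma sum_filter_two_le_prod_pow_le (hq : ∀ i, 0 ≤ q i) (i : ι) (j : ℕ) :
    ∑ x ∈ piAntidiag univ j with 2 ≤ x i, ∏ k, q k ^ x k
      ≤ q i ^ 2 * completeHomogeneous q (j - 2) := by
  have hsub : (piAntidiag univ j).filter (fun x : ι → ℕ => 2 ≤ x i)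
      ⊆ (piAntidiag univ (j - 2)).image (fun y : ι → ℕ => y + Pi.single i 2) := by
    intro x hx
    obtain ⟨hxj, hxi⟩ := mem_filter.1 hx
    have hle : Pi.single i 2 ≤ x := fun k => by
      by_cases hk : k = i
      · subst hk; simpa using hxi
      · simp [hk]
    refine mem_image.2 ⟨x - Pi.single i 2, ?_, tsub_add_cancel_of_le hle⟩
    simp only [mem_piAntidiag, mem_univ, implies_true, and_true] at hxj ⊢
    rw [Pi.sub_def, sum_tsub_distrib _ fun k _ => hle k, Fintype.sum_pi_single', hxj]
  calc ∑ x ∈ piAntidiag univ j with 2 ≤ x i, ∏ k, q k ^ x k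
      ≤ ∑ x ∈ (piAntidiag univ (j - 2)).image (fun y : ι → ℕ => y + Pi.single i 2),
          ∏ k, q k ^ x k :=
        sum_le_sum_of_subset_of_nonneg hsub fun x _ _ => prod_pow_nonneg hq x
    _ = ∑ y ∈ piAntidiag univ (j - 2), q i ^ 2 * ∏ k, q k ^ y k := by
        rw [sum_image fun y _ z _ h => add_right_cancel h]
        refine sum_congr rfl fun y _ => ?_
        simp only [Pi.add_apply, pow_add, prod_mul_distrib]
        rw [mul_comm, Fintype.prod_eq_single i fun k hk => by simp [hk]]
        simp
    _ = q i ^ 2 * completeHomogeneous q (j - 2) := by rw [completeHomogeneous, mul_sum]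

lemma factorial_mul_completeHomogeneous_le (hq : ∀ i, 0 ≤ q i) (j : ℕ) :
    j.factorial * completeHomogeneous q j
      ≤ (∑ i, q i) ^ j + j.factorial * ((∑ i, q i ^ 2) * completeHomogeneous q (j - 2)) := by
  calc (j.factorial : ℝ) * completeHomogeneous q j
      ≤ ∑ x ∈ piAntidiag univ j,
          (Nat.multinomial univ x + j.factorial * #{i | 2 ≤ x i} : ℝ) * ∏ i, q i ^ x i := by
        rw [completeHomogeneous, mul_sum]
        refine sum_le_sum fun x hx => mul_le_mul_of_nonneg_right ?_ (prod_pow_nonneg hq x)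
        exact_mod_cast factorial_le_multinomial_add hx
    _ = (∑ i, q i) ^ j + j.factorial * ∑ i, ∑ x ∈ piAntidiag univ j with 2 ≤ x i,
          ∏ k, q k ^ x k := by
        simp only [add_mul, sum_add_distrib, ← sum_pow_eq_sum_piAntidiag, card_eq_sum_ones,
          Nat.cast_sum, sum_filter, mul_assoc, sum_mul, ← mul_sum]
        rw [sum_comm]
        simp
    _ ≤ (∑ i, q i) ^ j + j.factorial * ((∑ i, q i ^ 2) * completeHomogeneous q (j - 2)) := by
        rw [sum_mul]
        gcongr with i
        exact sum_filter_two_le_prod_pow_le hq i j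

lemma pow_sum_div_factorial_le_completeHomogeneous (hq : ∀ i, 0 ≤ q i) (j : ℕ) :
    (∑ i, q i) ^ j / j.factorial ≤ completeHomogeneous q j := by
  rw [div_le_iff₀ (by positivity), mul_comm]
  exact pow_sum_le_factorial_mul_completeHomogeneous hq j

lemma completeHomogeneous_le_pow_sum_div_factorial_add (hq : ∀ i, 0 ≤ q i) (j : ℕ) :
    completeHomogeneous q j
      ≤ (∑ i, q i) ^ j / j.factorial + (∑ i, q i ^ 2) * (∑ i, q i) ^ (j - 2) := by
  have hfac : (0 : ℝ) < j.factorial := by positivity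
  have hsq : 0 ≤ ∑ i, q i ^ 2 := sum_nonneg fun i _ => sq_nonneg _
  rw [← mul_le_mul_iff_right₀ hfac, mul_add, mul_div_cancel₀ _ hfac.ne']
  refine (factorial_mul_completeHomogeneous_le hq j).trans ?_
  gcongr
  exact completeHomogeneous_le_pow_sum hq _

end CompleteHomogeneous

lemma exp_neg_div_one_sub_le {t m : ℝ} (ht : 0 ≤ t) (htm : t ≤ m) (hm : m < 1) :
    Real.exp (-(t / (1 - m))) ≤ 1 - t := by
  have hm' : 0 < 1 - m := by linarith
  have key : 1 ≤ (1 - t) * (1 + t / (1 - m)) := by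
    have : t ≤ (1 - t) * t / (1 - m) := by rw [le_div_iff₀ hm']; nlinarith
    rw [mul_one_add, ← mul_div_assoc]
    linarith
  rw [Real.exp_neg, inv_le_iff_one_le_mul₀ (Real.exp_pos _)]
  exact key.trans (mul_le_mul_of_nonneg_left (by linarith [Real.add_one_le_exp (t / (1 - m))])
    (by linarith))

lemma exp_neg_sum_div_le_prod_one_sub {ι : Type*} (s : Finset ι) {q : ι → ℝ} {m : ℝ}
    (hq : ∀ i ∈ s, 0 ≤ q i) (hqm : ∀ i ∈ s, q i ≤ m) (hm : m < 1) :
    Real.exp (-((∑ i ∈ s, q i) / (1 - m))) ≤ ∏ i ∈ s, (1 - q i) := by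
  rw [sum_div, ← sum_neg_distrib, Real.exp_sum]
  exact prod_le_prod (fun i _ => (Real.exp_pos _).le)
    fun i hi => exp_neg_div_one_sub_le (hq i hi) (hqm i hi) hm

lemma prod_one_sub_le_exp_neg_sum {ι : Type*} (s : Finset ι) {q : ι → ℝ}
    (hq : ∀ i ∈ s, q i ≤ 1) :
    ∏ i ∈ s, (1 - q i) ≤ Real.exp (-∑ i ∈ s, q i) := by
  rw [← sum_neg_distrib, Real.exp_sum]
  exact prod_le_prod (fun i hi => sub_nonneg.2 (hq i hi)) fun i _ => Real.one_sub_le_exp_neg _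

section TriangularArray

variable {ι : ℕ → Type*} {q : ∀ n, ι n → ℝ} {lam : ℝ}

lemma tendsto_iSup_zero_of_eventually_lt (hq : ∀ n i, 0 ≤ q n i)
    (h : ∀ ε > 0, ∀ᶠ n in atTop, ∀ i, q n i < ε) :
    Tendsto (fun n => ⨆ i, q n i) atTop (𝓝 0) := by
  refine tendsto_order.2 ⟨fun a ha => .of_forall fun n => ha.trans_le (Real.iSup_nonneg (hq n)),
    fun a ha => ?_⟩
  filter_upwards [h (a / 2) (by positivity)] with n hn
  exact (Real.iSup_le (fun i => (hn i).le) (by positivity)).trans_lt (by linarith)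

variable [∀ n, Fintype (ι n)]

lemma tendsto_sum_sq_zero (hq : ∀ n i, 0 ≤ q n i)
    (hsup : Tendsto (fun n => ⨆ i, q n i) atTop (𝓝 0))
    (hsum : Tendsto (fun n => ∑ i, q n i) atTop (𝓝 lam)) :
    Tendsto (fun n => ∑ i, q n i ^ 2) atTop (𝓝 0) := by
  refine squeeze_zero (fun n => sum_nonneg fun i _ => sq_nonneg _) (fun n => ?_)
    (by simpa using hsup.mul hsum)
  rw [mul_sum]
  exact sum_le_sum fun i _ => by
    rw [sq]; exact mul_le_mul_of_nonneg_right (le_ciSup (Finite.bddAbove_range _) i) (hq n i)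

lemma tendsto_prod_one_sub (hq : ∀ n i, 0 ≤ q n i)
    (hsup : Tendsto (fun n => ⨆ i, q n i) atTop (𝓝 0))
    (hsum : Tendsto (fun n => ∑ i, q n i) atTop (𝓝 lam)) :
    Tendsto (fun n => ∏ i, (1 - q n i)) atTop (𝓝 (Real.exp (-lam))) := by
  have hlt : ∀ᶠ n in atTop, ⨆ i, q n i < 1 := hsup.eventually_lt_const one_pos
  have hlower : Tendsto (fun n => Real.exp (-((∑ i, q n i) / (1 - ⨆ i, q n i)))) atTop
      (𝓝 (Real.exp (-lam))) := by
    simpa using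
      (hsum.div (tendsto_const_nhds.sub hsup) (by norm_num : (1 : ℝ) - 0 ≠ 0)).neg.rexp
  refine tendsto_of_tendsto_of_tendsto_of_le_of_le' hlower hsum.neg.rexp ?_ ?_
  · filter_upwards [hlt] with n hn
    exact exp_neg_sum_div_le_prod_one_sub _ (fun i _ => hq n i)
      (fun i _ => le_ciSup (Finite.bddAbove_range _) i) hn
  · filter_upwards [hlt] with n hn
    exact prod_one_sub_le_exp_neg_sum _
      fun i _ => ((le_ciSup (Finite.bddAbove_range _) i).trans_lt hn).le

lemma tendsto_completeHomogeneous [∀ n, DecidableEq (ι n)] (hq : ∀ n i, 0 ≤ q n i)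
    (hsup : Tendsto (fun n => ⨆ i, q n i) atTop (𝓝 0))
    (hsum : Tendsto (fun n => ∑ i, q n i) atTop (𝓝 lam)) (j : ℕ) :
    Tendsto (fun n => completeHomogeneous (q n) j) atTop (𝓝 (lam ^ j / j.factorial)) := by
  have hlower : Tendsto (fun n => (∑ i, q n i) ^ j / j.factorial) atTop
      (𝓝 (lam ^ j / j.factorial)) := (hsum.pow j).div_const _
  have hupper := hlower.add ((tendsto_sum_sq_zero hq hsup hsum).mul (hsum.pow (j - 2)))
  rw [zero_mul, add_zero] at hupper
  exact tendsto_of_tendsto_of_tendsto_of_le_of_le hlower hupper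
    (fun n => pow_sum_div_factorial_le_completeHomogeneous (hq n) j)
    (fun n => completeHomogeneous_le_pow_sum_div_factorial_add (hq n) j)

end TriangularArray

section IndependentSum

variable {Ω ι : Type*} [MeasurableSpace Ω] {μ : Measure Ω} [IsFiniteMeasure μ]
  [Fintype ι] [DecidableEq ι] {X : ι → Ω → ℕ}

lemma measureReal_sum_eq_sum_piAntidiag_prod (hX : ∀ i, Measurable (X i))
    (hindep : iIndepFun X μ) (j : ℕ) :
    μ.real {ω | ∑ i, X i ω = j}
      = ∑ x ∈ piAntidiag univ j, ∏ i, μ.real {ω | X i ω = x i} := by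
  set V : Ω → ι → ℕ := fun ω i => X i ω
  have hfiber : ∀ x, V ⁻¹' {x} = ⋂ i, X i ⁻¹' {x i} := fun x => by
    ext ω; simp [V, funext_iff]
  have hevent : {ω | ∑ i, X i ω = j} = V ⁻¹' ↑(piAntidiag (univ : Finset ι) j) := by
    ext ω; simp [V]
  rw [hevent, ← sum_measureReal_preimage_singleton _ fun x _ => by
    rw [hfiber]; exact .iInter fun i => hX i (measurableSet_singleton _)]
  refine sum_congr rfl fun x _ => ?_
  rw [hfiber, measureReal_def,
    hindep.meas_iInter fun i => ⟨{x i}, measurableSet_singleton _, rfl⟩, ENNReal.toReal_prod]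
  rfl

lemma measureReal_sum_eq_prod_mul_completeHomogeneous (hX : ∀ i, Measurable (X i))
    (hindep : iIndepFun X μ) {p : ι → ℝ}
    (hlaw : ∀ i m, μ.real {ω | X i ω = m} = p i * (1 - p i) ^ m) (j : ℕ) :
    μ.real {ω | ∑ i, X i ω = j} = (∏ i, p i) * completeHomogeneous (fun i => 1 - p i) j := by
  simp only [measureReal_sum_eq_sum_piAntidiag_prod hX hindep, hlaw, prod_mul_distrib,
    completeHomogeneous, mul_sum]

end IndependentSum

theorem corrected_geometric_array_to_poisson_general
    {Ω : Type*} [MeasureSpace Ω] [IsProbabilityMeasure (ℙ : Measure Ω)]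
    (K : ℕ → ℕ)
    (X : ℕ → ℕ → Ω → ℕ) (hX : ∀ n k, Measurable (X n k))
    (p : ℕ → ℕ → ℝ) (hp : ∀ n k, k < K n → 0 < p n k ∧ p n k < 1)
    (hindep : ∀ n, iIndepFun
      (fun k : Fin (K n) => X n k) ℙ)
    (hlaw : ∀ n, ∀ k < K n, ∀ j : ℕ,
      (ℙ {ω | X n k ω = j}).toReal = p n k * (1 - p n k) ^ j)
    (hsup : ∀ ε > (0 : ℝ), ∀ᶠ n in atTop, ∀ k < K n, 1 - p n k < ε)
    (lam : ℝ)
    (hsum : Tendsto (fun n => ∑ k ∈ Finset.range (K n), (1 - p n k)) atTop (nhds lam)) :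
    ∀ j : ℕ, Tendsto
      (fun n => (ℙ {ω | ∑ k ∈ Finset.range (K n), X n k ω = j}).toReal) atTop
      (nhds (Real.exp (-lam) * lam ^ j / j.factorial)) := by
  intro j
  set q : ∀ n, Fin (K n) → ℝ := fun n k => 1 - p n k
  have hq : ∀ n k, 0 ≤ q n k := fun n k => sub_nonneg.2 (hp n k k.isLt).2.le
  have hsup' := tendsto_iSup_zero_of_eventually_lt hq fun ε hε =>
    (hsup ε hε).mono fun n hn k => hn k k.isLt
  have hsum' : Tendsto (fun n => ∑ k, q n k) atTop (nhds lam) :=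
    hsum.congr fun n => (Fin.sum_univ_eq_sum_range (fun k => 1 - p n k) (K n)).symm
  have hprob : ∀ n, (ℙ {ω | ∑ k ∈ Finset.range (K n), X n k ω = j}).toReal
      = (∏ k, (1 - q n k)) * completeHomogeneous (q n) j := fun n => by
    simp_rw [← Fin.sum_univ_eq_sum_range (fun k => X n k _), q, sub_sub_cancel]
    exact measureReal_sum_eq_prod_mul_completeHomogeneous (X := fun k : Fin (K n) => X n k)
      (fun k => hX n k) (hindep n) (fun k => hlaw n k k.isLt) j
  simp_rw [hprob, mul_div_assoc]
  exact (tendsto_prod_one_sub hq hsup' hsum').mul (tendsto_completeHomogeneous hq hsup' hsum' j)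

/-- For a by-row independent array of corrected geometric `G*(p k n)` random
variables (with `P(X = j) = p q^j`, `q = 1 - p`) with `k(n) → ∞`,
`sup_{k < k(n)} q_{k,n} → 0` and `∑_{k < k(n)} q_{k,n} → λ > 0`,
the row sums converge in distribution to the Poisson law `P(λ)`,
i.e. for every `j : ℕ`, `P(S_n = j) → exp(-λ) λ^j / j!`. -/
theorem corrected_geometric_array_to_poisson
    {Ω : Type*} [MeasureSpace Ω] [IsProbabilityMeasure (ℙ : Measure Ω)]
    (K : ℕ → ℕ) (hK : Tendsto K atTop atTop)
    (X : ℕ → ℕ → Ω → ℕ) (hX : ∀ n k, Measurable (X n k))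
    (p : ℕ → ℕ → ℝ) (hp : ∀ n k, k < K n → 0 < p n k ∧ p n k < 1)
    (hindep : ∀ n, iIndepFun
      (fun k : Fin (K n) => X n k) ℙ)
    (hlaw : ∀ n, ∀ k < K n, ∀ j : ℕ,
      (ℙ {ω | X n k ω = j}).toReal = p n k * (1 - p n k) ^ j)
    (hsup : ∀ ε > (0 : ℝ), ∀ᶠ n in atTop, ∀ k < K n, 1 - p n k < ε)
    (lam : ℝ) (hlam : 0 < lam)
    (hsum : Tendsto (fun n => ∑ k ∈ Finset.range (K n), (1 - p n k)) atTop (nhds lam)) :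
    ∀ j : ℕ, Tendsto
      (fun n => (ℙ {ω | ∑ k ∈ Finset.range (K n), X n k ω = j}).toReal) atTop
      (nhds (Real.exp (-lam) * lam ^ j / j.factorial)) :=
  corrected_geometric_array_to_poisson_general K X hX p hp hindep hlaw hsup lam hsum
end

section
/- Let p_{k,n} ∈ (0,1) for 1 ≤ k ≤ k(n), n ≥ 1, with q_{k,n} = 1 − p_{k,n}. Assume sup_{1≤k≤k(n)} q_{k,n} → 0 and Σ_{k=1}^{k(n)} q_{k,n} → λ for some λ ∈ (0,∞). Then for every ε with 0 < ε < 1/2, the Lindeberg–Poisson sum L_{n,P}(ε) = Σ_{k=1}^{k(n)} Σ_{j=0}^{∞} 1{|j − q_{k,n}/p_{k,n} − 1| ≥ ε} (j − q_{k,n}/p_{k,n})² p_{k,n} q_{k,n}^j → 0 as n → ∞. -/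
/-!
Once `q < ε/2`, the atom `j = 1` of `G*(p)` lies within `ε` of the shifted mean `q/p + 1`, so
only `j = 0` and `j ≥ 2` enter the Lindeberg sum, and their contribution is `O(q²)` with a
constant uniform in `q ≤ 1/2`. Hence `L_{n,P}(ε) ≤ C ∑_k q_{k,n}² ≤ C (max_k q_{k,n}) ∑_k q_{k,n}`,
which tends to `0 · λ = 0`.
-/

open Filter Topology

noncomputable def geometricLindebergTerm (ε p q : ℝ) (j : ℕ) : ℝ :=
  (if ε ≤ |(j : ℝ) - q / p - 1| then 1 else 0) * ((j : ℝ) - q / p) ^ 2 * p * q ^ j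

theorem geometricLindebergTerm_nonneg {p q : ℝ} (hp : 0 ≤ p) (hq : 0 ≤ q) (ε : ℝ) (j : ℕ) :
    0 ≤ geometricLindebergTerm ε p q j := by
  unfold geometricLindebergTerm
  split_ifs <;> positivity

theorem summable_succ_sq_mul_half_pow :
    Summable fun j : ℕ => ((j : ℝ) + 1) ^ 2 * (1 / 2 : ℝ) ^ j := by
  have h := (summable_nat_add_iff 1).2 <|
    summable_pow_mul_geometric_of_norm_lt_one (R := ℝ) 2 (r := 1 / 2) (by norm_num)
  refine (h.mul_left 2).congr fun j => ?_
  push_cast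
  ring

theorem geometricLindebergTerm_le {ε p q : ℝ} (hpq : q = 1 - p) (hq : 0 ≤ q) (hqε : 2 * q < ε)
    (hε : ε ≤ 1) (j : ℕ) :
    geometricLindebergTerm ε p q j ≤ 4 * q ^ 2 * (((j : ℝ) + 1) ^ 2 * (1 / 2 : ℝ) ^ j) := by
  have hp : 1 / 2 < p := by linarith
  have hm0 : 0 ≤ q / p := by positivity
  have hm : q / p ≤ 2 * q := by rw [div_le_iff₀ (by linarith)]; nlinarith
  unfold geometricLindebergTerm
  match j with
  | 0 =>
    have : (q / p) ^ 2 * p ≤ 2 * q ^ 2 := by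
      rw [div_pow, div_mul_eq_mul_div, div_le_iff₀ (by positivity)]
      have h2p : 0 ≤ 2 * p - 1 := by linarith
      nlinarith [mul_nonneg (mul_nonneg (sq_nonneg q) (by linarith : (0 : ℝ) ≤ p)) h2p]
    split_ifs <;> norm_num <;> nlinarith
  | 1 =>
    have : ¬ ε ≤ |((1 : ℕ) : ℝ) - q / p - 1| := by
      rw [Nat.cast_one, sub_sub_cancel_left, abs_neg, abs_of_nonneg hm0]; linarith
    rw [if_neg this, zero_mul, zero_mul, zero_mul]
    positivity
  | i + 2 =>
    have hqi : q ^ i ≤ (1 / 2 : ℝ) ^ i := pow_le_pow_left₀ hq (by linarith) i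
    have hind : (if ε ≤ |((i + 2 : ℕ) : ℝ) - q / p - 1| then (1 : ℝ) else 0) ≤ 1 := by
      split_ifs <;> norm_num
    push_cast at hind ⊢
    have hj : ((i : ℝ) + 2 - q / p) ^ 2 * p ≤ ((i : ℝ) + 2 + 1) ^ 2 := by
      have : (0 : ℝ) ≤ i := i.cast_nonneg
      nlinarith
    calc _ ≤ 1 * ((i : ℝ) + 2 - q / p) ^ 2 * p * q ^ (i + 2) := by gcongr
      _ = q ^ 2 * (((i : ℝ) + 2 - q / p) ^ 2 * p) * q ^ i := by ring
      _ ≤ q ^ 2 * ((i : ℝ) + 2 + 1) ^ 2 * (1 / 2 : ℝ) ^ i := by gcongr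
      _ = _ := by ring

theorem tsum_geometricLindebergTerm_le {ε p q : ℝ} (hpq : q = 1 - p) (hq : 0 ≤ q)
    (hqε : 2 * q < ε) (hε : ε ≤ 1) :
    ∑' j, geometricLindebergTerm ε p q j ≤
      4 * (∑' j : ℕ, ((j : ℝ) + 1) ^ 2 * (1 / 2 : ℝ) ^ j) * q ^ 2 := by
  have hg := summable_succ_sq_mul_half_pow.mul_left (4 * q ^ 2)
  have hle := geometricLindebergTerm_le hpq hq hqε hε
  calc ∑' j, geometricLindebergTerm ε p q j
      ≤ ∑' j : ℕ, 4 * q ^ 2 * (((j : ℝ) + 1) ^ 2 * (1 / 2 : ℝ) ^ j) :=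
        (hg.of_nonneg_of_le (geometricLindebergTerm_nonneg (by linarith) hq ε) hle).tsum_le_tsum
          hle hg
    _ = _ := by rw [tsum_mul_left]; ring

theorem tendsto_sum_sq_of_uniformly_small {K : ℕ → ℕ} {x : ℕ → ℕ → ℝ} {s : ℝ}
    (hx : ∀ n k, k < K n → 0 ≤ x n k)
    (hsmall : ∀ δ > (0 : ℝ), ∀ᶠ n in atTop, ∀ k < K n, x n k < δ)
    (hsum : Tendsto (fun n => ∑ k ∈ Finset.range (K n), x n k) atTop (𝓝 s)) :
    Tendsto (fun n => ∑ k ∈ Finset.range (K n), x n k ^ 2) atTop (𝓝 0) := by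
  refine tendsto_order.2 ⟨fun a ha => Eventually.of_forall fun n => ha.trans_le <|
    Finset.sum_nonneg fun k hk => sq_nonneg _, fun a ha => ?_⟩
  set B := |s| + 1
  have hB : 0 < B := by positivity
  filter_upwards [hsmall (a / B) (by positivity),
    hsum.eventually (gt_mem_nhds (lt_of_le_of_lt (le_abs_self s) (lt_add_one |s|)))]
    with n hxn hsn
  calc ∑ k ∈ Finset.range (K n), x n k ^ 2
      ≤ ∑ k ∈ Finset.range (K n), a / B * x n k := by
        refine Finset.sum_le_sum fun k hk => ?_
        have hk := Finset.mem_range.1 hk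
        rw [sq]
        exact mul_le_mul_of_nonneg_right (hxn k hk).le (hx n k hk)
    _ = a / B * ∑ k ∈ Finset.range (K n), x n k := (Finset.mul_sum ..).symm
    _ < a / B * B := by gcongr
    _ = a := div_mul_cancel₀ a hB.ne'

theorem corrected_geometric_lindeberg_poisson_general
    (K : ℕ → ℕ) (p q : ℕ → ℕ → ℝ)
    (hp : ∀ n k, k < K n → 0 < p n k ∧ p n k < 1)
    (hq : ∀ n k, q n k = 1 - p n k)
    (hsup : ∀ ε > (0 : ℝ), ∀ᶠ n in atTop, ∀ k < K n, q n k < ε)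
    (lam : ℝ)
    (hsum : Tendsto (fun n => ∑ k ∈ Finset.range (K n), q n k) atTop (nhds lam)) :
    ∀ ε : ℝ, 0 < ε → ε < 1 / 2 →
      Tendsto (fun n => ∑ k ∈ Finset.range (K n), ∑' j : ℕ,
        (if ε ≤ |(j : ℝ) - q n k / p n k - 1| then 1 else 0) *
          ((j : ℝ) - q n k / p n k) ^ 2 * p n k * q n k ^ j)
        atTop (nhds 0) := by
  intro ε hε hε2
  change Tendsto
    (fun n => ∑ k ∈ Finset.range (K n), ∑' j, geometricLindebergTerm ε (p n k) (q n k) j)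
    atTop (𝓝 0)
  have hq0 : ∀ n k, k < K n → 0 ≤ q n k := fun n k hk => by linarith [hq n k, (hp n k hk).2]
  set C := 4 * ∑' j : ℕ, ((j : ℝ) + 1) ^ 2 * (1 / 2 : ℝ) ^ j
  have hsq := (tendsto_sum_sq_of_uniformly_small hq0 hsup hsum).const_mul C
  rw [mul_zero] at hsq
  refine squeeze_zero' (Eventually.of_forall fun n => Finset.sum_nonneg fun k hk =>
    tsum_nonneg <| geometricLindebergTerm_nonneg (hp n k (Finset.mem_range.1 hk)).1.le
      (hq0 n k (Finset.mem_range.1 hk)) ε) ?_ hsq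
  filter_upwards [hsup (ε / 2) (by positivity)] with n hn
  rw [Finset.mul_sum]
  refine Finset.sum_le_sum fun k hk => ?_
  have hk := Finset.mem_range.1 hk
  exact tsum_geometricLindebergTerm_le (hq n k) (hq0 n k hk) (by linarith [hn k hk])
    (by linarith)

/-- If `p_{k,n} ∈ (0,1)`, `q_{k,n} = 1 - p_{k,n}`,
`sup_{k < k(n)} q_{k,n} → 0` and `∑_{k < k(n)} q_{k,n} → λ ∈ (0,∞)`, then for every
`0 < ε < 1/2`, the Lindeberg–Poisson sum
`L_{n,P}(ε) = ∑_k ∑_{j=0}^{∞} 1{|j - q_{k,n}/p_{k,n} - 1| ≥ ε} (j - q_{k,n}/p_{k,n})²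
p_{k,n} q_{k,n}^j` tends to `0`. -/
theorem corrected_geometric_lindeberg_poisson
    (K : ℕ → ℕ) (p q : ℕ → ℕ → ℝ)
    (hp : ∀ n k, k < K n → 0 < p n k ∧ p n k < 1)
    (hq : ∀ n k, q n k = 1 - p n k)
    (hsup : ∀ ε > (0 : ℝ), ∀ᶠ n in atTop, ∀ k < K n, q n k < ε)
    (lam : ℝ) (hlam : 0 < lam)
    (hsum : Tendsto (fun n => ∑ k ∈ Finset.range (K n), q n k) atTop (nhds lam)) :
    ∀ ε : ℝ, 0 < ε → ε < 1 / 2 →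
      Tendsto (fun n => ∑ k ∈ Finset.range (K n), ∑' j : ℕ,
        (if ε ≤ |(j : ℝ) - q n k / p n k - 1| then 1 else 0) *
          ((j : ℝ) - q n k / p n k) ^ 2 * p n k * q n k ^ j)
        atTop (nhds 0) :=
  corrected_geometric_lindeberg_poisson_general K p q hp hq hsup lam hsum
end
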